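/- arXiv:1709.08579 — 6 statements merged into one kernel-verified Lean document; each statement's English description precedes it below -/
import Mathlib

section
/- Let f be an automorphism of a finite abelian group M, φ : M → N surjective with kernel K satisfying f(K) ⊆ K and p^a K = 0 for a prime p and a ≥ 1. Let u ∈ M, let s be the length of the cycle of the induced map f̄ containing φ(u), and let w = f^s(u) − u ∈ K with cycle length k under f. Then the cycle length of u under f equals p^b · lcm(s, k) for some integer 0 ≤ b ≤ a. -/
theorem stmt_4 {M N : Type*} [AddCommGroup M] [Finite M] [AddCommGroup N]
    (f : M ≃+ M) (φ : M →+ N) (hφ : Function.Surjective φ)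
    (hK : ∀ x ∈ φ.ker, f x ∈ φ.ker)
    (p : ℕ) (hp : p.Prime) (a : ℕ)
    (ha : 0 < a ∧ (∀ x ∈ φ.ker, p ^ a • x = 0) ∧
      ∀ i, 0 < i → (∀ x ∈ φ.ker, p ^ i • x = 0) → a ≤ i)
    (u : M) (s : ℕ)
    (hs : IsLeast {t | 0 < t ∧ φ ((⇑f)^[t] u) = φ u} s)
    (w : M) (hw : w = (⇑f)^[s] u - u)
    (k : ℕ) (hk : k = Function.minimalPeriod (⇑f) w) :
    ∃ b ≤ a, Function.minimalPeriod (⇑f) u = p ^ b * Nat.lcm s k := by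
  classical
  obtain ⟨⟨hs0, hsker⟩, hsmin⟩ := hs
  have hinj : Function.Injective ⇑f := f.injective
  -- iterates are additive
  have hsub : ∀ (n : ℕ) (x y : M), (⇑f)^[n] (x - y) = (⇑f)^[n] x - (⇑f)^[n] y := by
    intro n
    induction n with
    | zero => intro x y; simp
    | succ n ih =>
      intro x y
      rw [Function.iterate_succ_apply', Function.iterate_succ_apply',
        Function.iterate_succ_apply', ih, map_sub]
  have hadd : ∀ (n : ℕ) (x y : M), (⇑f)^[n] (x + y) = (⇑f)^[n] x + (⇑f)^[n] y := by
    intro n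
    induction n with
    | zero => intro x y; simp
    | succ n ih =>
      intro x y
      rw [Function.iterate_succ_apply', Function.iterate_succ_apply',
        Function.iterate_succ_apply', ih, map_add]
  have hsmulit : ∀ (n i : ℕ) (x : M), (⇑f)^[n] (i • x) = i • (⇑f)^[n] x := by
    intro n i
    induction n with
    | zero => intro x; simp
    | succ n ih =>
      intro x
      rw [Function.iterate_succ_apply', Function.iterate_succ_apply', ih, map_nsmul]
  -- K is invariant both ways
  have hKmem : ∀ x : M, x ∈ φ.ker ↔ f x ∈ φ.ker := by
    intro x
    constructor
    · exact hK x
    · intro hx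
      have hg : Function.Injective (fun y : φ.ker => (⟨f y, hK y y.2⟩ : φ.ker)) := by
        intro y z hyz
        have : f (y : M) = f (z : M) := congrArg Subtype.val hyz
        exact Subtype.ext (hinj this)
      have hgs : Function.Surjective (fun y : φ.ker => (⟨f y, hK y y.2⟩ : φ.ker)) :=
        Finite.surjective_of_injective hg
      obtain ⟨y, hy⟩ := hgs ⟨f x, hx⟩
      have : f (y : M) = f x := congrArg Subtype.val hy
      have := hinj this
      rw [← this]
      exact y.2
  have hKiter : ∀ (n : ℕ) (x : M), x ∈ φ.ker ↔ (⇑f)^[n] x ∈ φ.ker := by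
    intro n
    induction n with
    | zero => intro x; simp
    | succ n ih =>
      intro x
      rw [Function.iterate_succ_apply', ← hKmem, ih]
  have hcomm : ∀ (m n : ℕ) (x : M), (⇑f)^[m] ((⇑f)^[n] x) = (⇑f)^[n] ((⇑f)^[m] x) := by
    intro m n x
    rw [← Function.iterate_add_apply, ← Function.iterate_add_apply, Nat.add_comm]
  -- membership characterization
  have hmemS : ∀ t : ℕ, φ ((⇑f)^[t] u) = φ u ↔ (⇑f)^[t] u - u ∈ φ.ker := by
    intro t
    rw [AddMonoidHom.mem_ker, map_sub, sub_eq_zero]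
  have hS_add : ∀ t t' : ℕ, (⇑f)^[t] u - u ∈ φ.ker → (⇑f)^[t'] u - u ∈ φ.ker →
      (⇑f)^[t + t'] u - u ∈ φ.ker := by
    intro t t' h1 h2
    have heq : (⇑f)^[t + t'] u - u = (⇑f)^[t] ((⇑f)^[t'] u - u) + ((⇑f)^[t] u - u) := by
      rw [hsub, Function.iterate_add_apply]; abel
    rw [heq]
    exact add_mem ((hKiter t _).mp h2) h1
  have hwK : w ∈ φ.ker := by rw [hw]; exact (hmemS s).mp hsker
  have hS_mul : ∀ q : ℕ, (⇑f)^[s * q] u - u ∈ φ.ker := by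
    intro q
    induction q with
    | zero => simp
    | succ q ih =>
      have : s * (q + 1) = s * q + s := by ring
      rw [this]
      exact hS_add _ _ ih ((hmemS s).mp hsker)
  have hS_cancel : ∀ t t' : ℕ, (⇑f)^[t + t'] u - u ∈ φ.ker → (⇑f)^[t] u - u ∈ φ.ker →
      (⇑f)^[t'] u - u ∈ φ.ker := by
    intro t t' h1 h2
    have h3 : (⇑f)^[t] ((⇑f)^[t'] u - u) ∈ φ.ker := by
      have heq : (⇑f)^[t] ((⇑f)^[t'] u - u) = ((⇑f)^[t + t'] u - u) - ((⇑f)^[t] u - u) := by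
        rw [hsub, Function.iterate_add_apply]; abel
      rw [heq]
      exact sub_mem h1 h2
    exact (hKiter t _).mpr h3
  have hs_dvd : ∀ t : ℕ, (⇑f)^[t] u - u ∈ φ.ker → s ∣ t := by
    intro t ht
    have h1 : s * (t / s) + t % s = t := Nat.div_add_mod t s
    have hr : (⇑f)^[t % s] u - u ∈ φ.ker := by
      refine hS_cancel (s * (t / s)) (t % s) ?_ (hS_mul _)
      rw [h1]; exact ht
    by_contra hnd
    have hr0 : 0 < t % s := by
      rcases Nat.eq_zero_or_pos (t % s) with h0 | h0
      · exact absurd (Nat.dvd_of_mod_eq_zero h0) hnd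
      · exact h0
    have hle : s ≤ t % s := hsmin ⟨hr0, (hmemS _).mpr hr⟩
    have hlt : t % s < s := Nat.mod_lt t hs0
    omega
  -- every point is periodic
  have hper : ∀ x : M, x ∈ Function.periodicPts ⇑f := by
    intro x
    have key : ∀ i j : ℕ, i < j → (⇑f)^[i] x = (⇑f)^[j] x →
        ∃ n, 0 < n ∧ (⇑f)^[n] x = x := by
      intro i j hij h
      refine ⟨j - i, by omega, ?_⟩
      have heq : (⇑f)^[i] ((⇑f)^[j - i] x) = (⇑f)^[i] x := by
        rw [← Function.iterate_add_apply, show i + (j - i) = j by omega]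
        exact h.symm
      exact hinj.iterate i heq
    obtain ⟨i, j, hne, h⟩ := Finite.exists_ne_map_eq_of_infinite (fun n : ℕ => (⇑f)^[n] x)
    rw [Function.mem_periodicPts]
    rcases lt_or_gt_of_ne hne with hlt | hlt
    · obtain ⟨n, hn, h'⟩ := key i j hlt h
      exact ⟨n, hn, h'⟩
    · obtain ⟨n, hn, h'⟩ := key j i hlt h.symm
      exact ⟨n, hn, h'⟩
  set L := Function.minimalPeriod ⇑f u with hL
  have hLfix : (⇑f)^[L] u = u := Function.iterate_minimalPeriod
  have hkpos : 0 < k := by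
    rw [hk]; exact Function.minimalPeriod_pos_of_mem_periodicPts (hper w)
  have hwfix : (⇑f)^[k] w = w := by rw [hk]; exact Function.iterate_minimalPeriod
  have hsL : s ∣ L := hs_dvd L (by rw [hLfix, sub_self]; exact zero_mem _)
  have hkL : k ∣ L := by
    have hLw : (⇑f)^[L] w = w := by
      rw [hw, hsub, hcomm, hLfix]
    rw [hk]
    exact Function.IsPeriodicPt.minimalPeriod_dvd hLw
  set c := Nat.lcm s k with hc
  have hcpos : 0 < c := Nat.lcm_pos hs0 hkpos
  have hcL : c ∣ L := Nat.lcm_dvd hsL hkL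
  -- the cocycle sums
  set W : ℕ → M := fun m => ∑ j ∈ Finset.range m, (⇑f)^[j * s] w with hW
  have hW0 : W 0 = 0 := by simp [hW]
  have hWsucc : ∀ m, W (m + 1) = W m + (⇑f)^[m * s] w := by
    intro m; simp [hW, Finset.sum_range_succ]
  have hWsucc' : ∀ m, W (m + 1) = (∑ j ∈ Finset.range m, (⇑f)^[(j + 1) * s] w) + w := by
    intro m; simp [hW, Finset.sum_range_succ']
  have hsum : ∀ (n m : ℕ), (⇑f)^[n] (W m) = ∑ j ∈ Finset.range m, (⇑f)^[n] ((⇑f)^[j * s] w) := by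
    intro n m
    induction m with
    | zero => simp [hW0]
    | succ m ih =>
      rw [hWsucc, hadd, ih, Finset.sum_range_succ]
  have hWK : ∀ m, W m ∈ φ.ker := by
    intro m
    exact sum_mem (fun j _ => (hKiter _ _).mp hwK)
  have hWit : ∀ m : ℕ, (⇑f)^[m * s] u = u + W m := by
    intro m
    induction m with
    | zero => simp [hW]
    | succ m ih =>
      have hms : (m + 1) * s = s + m * s := by ring
      rw [hms, Function.iterate_add_apply, ih, hadd]
      have h1 : (⇑f)^[s] (W m) = ∑ j ∈ Finset.range m, (⇑f)^[(j + 1) * s] w := by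
        rw [hsum]
        apply Finset.sum_congr rfl
        intro j _
        rw [← Function.iterate_add_apply, show s + j * s = (j + 1) * s by ring]
      have h2 : (⇑f)^[s] u = u + w := by rw [hw]; abel
      rw [h1, h2, hWsucc']
      abel
  obtain ⟨m₁, hm₁⟩ : ∃ m₁, c = m₁ * s := by
    obtain ⟨m₁, h⟩ := Nat.dvd_lcm_left s k
    exact ⟨m₁, by rw [hc, h, Nat.mul_comm]⟩
  have hcw : (⇑f)^[c] w = w := by
    obtain ⟨e, he⟩ := Nat.dvd_lcm_right s k
    have hP : Function.IsPeriodicPt (⇑f) k w := hwfix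
    have h2 : Function.IsPeriodicPt (⇑f) (k * e) w := Function.IsPeriodicPt.mul_const hP e
    rw [hc, he]
    exact h2
  have hWfix : (⇑f)^[c] (W m₁) = W m₁ := by
    have hWm : W m₁ = ∑ j ∈ Finset.range m₁, (⇑f)^[j * s] w := by simp [hW]
    rw [hsum, hWm]
    apply Finset.sum_congr rfl
    intro j _
    rw [hcomm, hcw]
  have hmain : ∀ i : ℕ, (⇑f)^[i * c] u = u + i • W m₁ := by
    intro i
    induction i with
    | zero => simp
    | succ i ih =>
      rw [show (i + 1) * c = c + i * c by ring, Function.iterate_add_apply, ih, hadd,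
        hsmulit, hWfix]
      have hcu : (⇑f)^[c] u = u + W m₁ := by rw [hm₁]; exact hWit m₁
      rw [hcu, succ_nsmul]
      abel
  have hfinal : (⇑f)^[p ^ a * c] u = u := by
    rw [hmain (p ^ a), ha.2.1 _ (hWK m₁), add_zero]
  have hLdvd : L ∣ p ^ a * c := by
    have : Function.IsPeriodicPt (⇑f) (p ^ a * c) u := hfinal
    exact Function.IsPeriodicPt.minimalPeriod_dvd this
  obtain ⟨r, hr⟩ := hcL
  have hrdvd : r ∣ p ^ a := by
    have h1 : c * r ∣ c * p ^ a := by
      rw [← hr, Nat.mul_comm c (p ^ a)] at *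
      exact hLdvd
    exact (mul_dvd_mul_iff_left (by omega : c ≠ 0)).mp h1
  obtain ⟨b, hb, hbr⟩ := (Nat.dvd_prime_pow hp).mp hrdvd
  exact ⟨b, hb, by rw [hr, hbr, Nat.mul_comm]⟩
end

section
/- Let f be an automorphism of a finite abelian group M, φ : M → N surjective with kernel K, f(K) ⊆ K. For u ∈ M, let c = ℓ(u) be the least positive integer with f^c(u) = u, let s = ℓ(φ(u)) under the induced map f̄, and let k = ℓ(f^s(u) − u), noting f^s(u) − u ∈ K. Then lcm(s, k) divides c. -/
theorem stmt_5 {M N : Type*} [AddCommGroup M] [Finite M] [AddCommGroup N]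
    (f : M ≃+ M) (φ : M →+ N) (hφ : Function.Surjective φ)
    (hK : ∀ x ∈ φ.ker, f x ∈ φ.ker)
    (u : M) (c : ℕ) (hc : c = Function.minimalPeriod (⇑f) u)
    (s : ℕ) (hs : IsLeast {t | 0 < t ∧ φ ((⇑f)^[t] u) = φ u} s)
    (k : ℕ) (hk : k = Function.minimalPeriod (⇑f) ((⇑f)^[s] u - u)) :
    Nat.lcm s k ∣ c := by
  have hsub : ∀ (n : ℕ) (a b : M), (⇑f)^[n] (a - b) = (⇑f)^[n] a - (⇑f)^[n] b := by
    intro n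
    induction n with
    | zero => intro a b; simp
    | succ n ih =>
      intro a b
      simp [Function.iterate_succ_apply', ih, map_sub]
  have hkerIter : ∀ (n : ℕ) (x : M), x ∈ φ.ker → (⇑f)^[n] x ∈ φ.ker := by
    intro n
    induction n with
    | zero => intro x hx; simpa using hx
    | succ n ih =>
      intro x hx
      rw [Function.iterate_succ_apply']
      exact hK _ (ih x hx)
  have hmem : ∀ t : ℕ, φ ((⇑f)^[t] u) = φ u ↔ (⇑f)^[t] u - u ∈ φ.ker := by
    intro t
    simp [AddMonoidHom.mem_ker, map_sub, sub_eq_zero]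
  have hspos : 0 < s := hs.1.1
  have hsK : (⇑f)^[s] u - u ∈ φ.ker := (hmem s).mp hs.1.2
  have key : ∀ t : ℕ, φ ((⇑f)^[t] u) = φ u → s ∣ t := by
    intro t
    induction t using Nat.strong_induction_on with
    | _ t ih =>
      intro ht
      rcases Nat.lt_or_ge t s with h | h
      · rcases Nat.eq_zero_or_pos t with rfl | htpos
        · exact dvd_zero s
        · exact absurd (hs.2 ⟨htpos, ht⟩) (by omega)
      · have h1 : (⇑f)^[t] u - u ∈ φ.ker := (hmem t).mp ht
        have h2 : (⇑f)^[t] u - (⇑f)^[t - s] u ∈ φ.ker := by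
          have h3 := hkerIter (t - s) _ hsK
          rw [hsub] at h3
          rw [← Function.iterate_add_apply] at h3
          have : t - s + s = t := by omega
          rwa [this] at h3
        have h4 : (⇑f)^[t - s] u - u ∈ φ.ker := by
          have := sub_mem h1 h2
          simpa using this
        have h5 : s ∣ t - s := ih (t - s) (by omega) ((hmem _).mpr h4)
        obtain ⟨m, hm⟩ := h5
        exact ⟨m + 1, by rw [Nat.mul_succ]; omega⟩
  have hcper : (⇑f)^[Function.minimalPeriod (⇑f) u] u = u :=
    Function.isPeriodicPt_minimalPeriod (⇑f) u
  have hcper' : (⇑f)^[c] u = u := by rw [hc]; exact hcper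
  have hsdvd : s ∣ c := key c (by rw [hcper'])
  have hkdvd : k ∣ c := by
    rw [hk]
    apply Function.IsPeriodicPt.minimalPeriod_dvd
    show (⇑f)^[c] ((⇑f)^[s] u - u) = (⇑f)^[s] u - u
    rw [hsub, ← Function.iterate_add_apply]
    have : c + s = s + c := by omega
    rw [this, Function.iterate_add_apply, hcper']
  exact Nat.lcm_dvd hsdvd hkdvd
end

section
/- Let f be an automorphism of a finite abelian group M with p^a M = 0 for a prime p. For u ∈ M and any surjective homomorphism φ : M → N with f-invariant kernel K, if s is the cycle length of φ(u), k is the cycle length of w = f^s(u) − u ∈ K, and n = k / gcd(s,k), then w₁ = w + f^s(w) + ⋯ + f^{(n−1)s}(w) is a fixed point of f^s, and f^{p^a · n · s}(u) = u. -/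
theorem stmt_6 {M N : Type*} [AddCommGroup M] [Finite M] [AddCommGroup N]
    (p : ℕ) (hp : p.Prime) (a : ℕ) (ha : 1 ≤ a)
    (hM : ∀ x : M, p ^ a • x = 0)
    (f : M ≃+ M) (φ : M →+ N) (hφ : Function.Surjective φ)
    (hK : ∀ x ∈ φ.ker, f x ∈ φ.ker)
    (u : M) (s : ℕ) (hs : IsLeast {t | 0 < t ∧ φ ((⇑f)^[t] u) = φ u} s)
    (w : M) (hw : w = (⇑f)^[s] u - u)
    (k : ℕ) (hk : k = Function.minimalPeriod (⇑f) w)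
    (n : ℕ) (hn : n = k / Nat.gcd s k)
    (w₁ : M) (hw₁ : w₁ = ∑ j ∈ Finset.range n, (⇑f)^[j * s] w) :
    (⇑f)^[s] w₁ = w₁ ∧ (⇑f)^[p ^ a * n * s] u = u := by
  -- iterates of f are additive
  have hadd : ∀ (m : ℕ) (x y : M), (⇑f)^[m] (x + y) = (⇑f)^[m] x + (⇑f)^[m] y := by
    intro m
    induction m with
    | zero => intro x y; simp
    | succ m ih =>
        intro x y
        simp [Function.iterate_succ_apply', ih, map_add]
  have hzero : ∀ m : ℕ, (⇑f)^[m] (0 : M) = 0 := fun m =>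
    Function.iterate_fixed (map_zero f) m
  have hsum : ∀ (m j : ℕ) (g : ℕ → M),
      (⇑f)^[m] (∑ i ∈ Finset.range j, g i) = ∑ i ∈ Finset.range j, (⇑f)^[m] (g i) := by
    intro m j g
    induction j with
    | zero => simp [hzero]
    | succ j ih => simp [Finset.sum_range_succ, hadd, ih]
  have hsmul : ∀ (m c : ℕ) (x : M), (⇑f)^[m] (c • x) = c • (⇑f)^[m] x := by
    intro m c x
    induction c with
    | zero => simp [hzero m]
    | succ c ih => simp [succ_nsmul, hadd, ih]
  -- w is a periodic point since f has finite order as a permutation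
  have hper : w ∈ Function.periodicPts (⇑f) := by
    obtain ⟨m, hm, hm1⟩ := (isOfFinOrder_of_finite (f.toEquiv)).exists_pow_eq_one
    refine ⟨m, hm, ?_⟩
    have : (⇑f.toEquiv)^[m] w = w := by
      rw [Equiv.Perm.iterate_eq_pow, hm1]; rfl
    exact this
  have hkpos : 0 < k := hk ▸ Function.minimalPeriod_pos_of_mem_periodicPts hper
  have hkw : Function.IsPeriodicPt (⇑f) k w := hk ▸ Function.isPeriodicPt_minimalPeriod (⇑f) w
  -- k divides n * s
  set g := Nat.gcd s k with hg
  have hgpos : 0 < g := Nat.pos_of_ne_zero fun h => by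
    have := Nat.eq_zero_of_gcd_eq_zero_right h; omega
  obtain ⟨s', hs'⟩ : g ∣ s := Nat.gcd_dvd_left s k
  obtain ⟨k', hk'⟩ : g ∣ k := Nat.gcd_dvd_right s k
  have hnk' : n = k' := by
    rw [hn, hk', Nat.mul_div_cancel_left _ hgpos]
  have hdvd : k ∣ n * s := ⟨s', by rw [hnk', hk', hs']; ring⟩
  have hnsw : (⇑f)^[n * s] w = w := by
    obtain ⟨c, hc⟩ := hdvd
    have := hkw.const_mul c
    rw [hc, Nat.mul_comm]
    exact this
  -- first claim
  have hshift : ∀ j : ℕ, (⇑f)^[s] ((⇑f)^[j * s] w) = (⇑f)^[(j + 1) * s] w := by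
    intro j
    rw [← Function.iterate_add_apply]
    congr 1
    ring
  have htel : (⇑f)^[s] w₁ = w₁ := by
    rw [hw₁, hsum]
    have h1 : ∑ j ∈ Finset.range n, (⇑f)^[s] ((⇑f)^[j * s] w)
        = ∑ j ∈ Finset.range n, (⇑f)^[(j + 1) * s] w := by
      exact Finset.sum_congr rfl fun j _ => hshift j
    have h2 : ∑ j ∈ Finset.range (n + 1), (⇑f)^[j * s] w
        = (∑ j ∈ Finset.range n, (⇑f)^[(j + 1) * s] w) + (⇑f)^[0 * s] w :=
      Finset.sum_range_succ' _ n
    have h3 : ∑ j ∈ Finset.range (n + 1), (⇑f)^[j * s] w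
        = (∑ j ∈ Finset.range n, (⇑f)^[j * s] w) + (⇑f)^[n * s] w :=
      Finset.sum_range_succ _ n
    rw [h1]
    have : (∑ j ∈ Finset.range n, (⇑f)^[(j + 1) * s] w) + w
        = (∑ j ∈ Finset.range n, (⇑f)^[j * s] w) + w := by
      rw [hnsw] at h3
      rw [← h3, h2]; simp
    exact add_right_cancel this
  refine ⟨htel, ?_⟩
  -- f^[s] u = u + w
  have hsu : (⇑f)^[s] u = u + w := by rw [hw]; abel
  -- iteration formula
  have hiter : ∀ j : ℕ, (⇑f)^[j * s] u = u + ∑ i ∈ Finset.range j, (⇑f)^[i * s] w := by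
    intro j
    induction j with
    | zero => simp
    | succ j ih =>
        have : (j + 1) * s = s + j * s := by ring
        rw [this, Function.iterate_add_apply, ih, hadd, hsu, hsum]
        rw [Finset.sum_range_succ' (fun i => (⇑f)^[i * s] w) j]
        have h4 : ∀ i ∈ Finset.range j, (⇑f)^[s] ((⇑f)^[i * s] w) = (⇑f)^[(i + 1) * s] w :=
          fun i _ => hshift i
        rw [Finset.sum_congr rfl h4]
        simp
        abel
  have hnsu : (⇑f)^[n * s] u = u + w₁ := by rw [hiter n, hw₁]
  have hnsw₁ : (⇑f)^[n * s] w₁ = w₁ := Function.IsPeriodicPt.const_mul htel n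
  -- f^[m * (n*s)] u = u + m • w₁
  have hmain : ∀ m : ℕ, (⇑f)^[m * (n * s)] u = u + m • w₁ := by
    intro m
    induction m with
    | zero => simp
    | succ m ih =>
        have : (m + 1) * (n * s) = n * s + m * (n * s) := by ring
        rw [this, Function.iterate_add_apply, ih, hadd, hnsu, hsmul, hnsw₁, succ_nsmul]
        abel
  have : p ^ a * n * s = p ^ a * (n * s) := by ring
  rw [this, hmain (p ^ a), hM w₁, add_zero]
end

section
/- Let p be a prime, M = ℤ_{p^{a₁}} × ⋯ × ℤ_{p^{a_m}} with 1 ≤ a₁ ≤ ⋯ ≤ a_m, f : M → M an automorphism, M_i the p^i-torsion subgroups, and for each 1 ≤ i ≤ a_m let c_{i1} be the maximal cycle length of the induced automorphism f̄_i on M_i / M_{i−1}. Then every cycle length of f divides p^{a_m − 1} · lcm(c_{11}, c_{21}, …, c_{a_m 1}). -/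
open Polynomial

-- common prime factor in a PID (specialized to polynomials over a field)
lemma common_prime {K : Type*} [Field K] {g h : K[X]} (hg : g ≠ 0)
    (hnc : ¬ IsCoprime g h) : ∃ q : K[X], Prime q ∧ q ∣ g ∧ q ∣ h := by
  classical
  set I : Ideal K[X] := Ideal.span {g, h} with hI
  have hprin : I.IsPrincipal := IsPrincipalIdealRing.principal I
  obtain ⟨d, hd⟩ := hprin
  have hgI : g ∈ I := Ideal.subset_span (by simp)
  have hhI : h ∈ I := Ideal.subset_span (by simp)
  rw [hd] at hgI hhI
  rw [Ideal.submodule_span_eq, Ideal.mem_span_singleton] at hgI hhI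
  have hd0 : d ≠ 0 := by rintro rfl; simp_all
  have hdu : ¬ IsUnit d := by
    intro hu
    apply hnc
    have h1 : (1 : K[X]) ∈ I := by
      rw [hd, Ideal.submodule_span_eq, Ideal.mem_span_singleton]
      exact hu.dvd
    rw [hI, Ideal.mem_span_pair] at h1
    obtain ⟨x, y, hxy⟩ := h1
    exact ⟨x, y, hxy⟩
  obtain ⟨q, hq, hqd⟩ := WfDvdMonoid.exists_irreducible_factor hdu hd0
  exact ⟨q, hq.prime, hqd.trans hgI, hqd.trans hhI⟩

lemma prime_pow_coprime {K : Type*} [Field K] {q x : K[X]} (hq : Prime q)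
    (hx : x ≠ 0) (hnd : ¬ q ∣ x) (b : ℕ) : IsCoprime (q ^ b) x := by
  by_contra hnc
  obtain ⟨q', hq', hq'1, hq'2⟩ := common_prime (pow_ne_zero _ hq.ne_zero) hnc
  have hq'q : q' ∣ q := hq'.dvd_of_dvd_pow hq'1
  obtain ⟨e, he⟩ := hq'q
  have : IsUnit e := (hq.irreducible.isUnit_or_isUnit he).resolve_left hq'.not_unit
  obtain ⟨v, rfl⟩ := this
  have hqq' : q ∣ q' := ⟨(v⁻¹ : K[X]ˣ), by rw [he, mul_assoc]; simp⟩
  exact hnd (hqq'.trans hq'2)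

lemma deg_pos_of_prime {K : Type*} [Field K] {q : K[X]} (hq : Prime q) :
    0 < q.natDegree := by
  rcases Nat.eq_zero_or_pos q.natDegree with h0 | h; swap
  · exact h
  · exfalso
    have := Polynomial.eq_C_of_natDegree_eq_zero h0
    apply hq.not_unit
    rw [this]
    exact (Polynomial.isUnit_C).2 (isUnit_iff_ne_zero.2 (fun hz => hq.ne_zero (by
      rw [this, hz, map_zero])))

lemma split_aux {K : Type*} [Field K] : ∀ n : ℕ, ∀ g h : K[X],
    g.natDegree + h.natDegree ≤ n → g ≠ 0 → h ≠ 0 →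
    ∃ g₁ h₁ : K[X], g₁ ∣ g ∧ h₁ ∣ h ∧ IsCoprime g₁ h₁ ∧
      ∀ k : K[X], g₁ * h₁ ∣ k ↔ g ∣ k ∧ h ∣ k := by
  intro n
  induction n with
  | zero =>
    intro g h hdeg hg hh
    have hgd : g.natDegree = 0 := by omega
    have hcop : IsCoprime g h := by
      have hgu : IsUnit g := by
        rw [Polynomial.eq_C_of_natDegree_eq_zero hgd]
        exact Polynomial.isUnit_C.2 (isUnit_iff_ne_zero.2 (fun hz => hg (by
          rw [Polynomial.eq_C_of_natDegree_eq_zero hgd, hz, map_zero])))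
      obtain ⟨u, rfl⟩ := hgu
      exact ⟨(↑u⁻¹ : K[X]), 0, by simp⟩
    exact ⟨g, h, dvd_rfl, dvd_rfl, hcop, fun k =>
      ⟨fun hk => ⟨(dvd_mul_right g h).trans hk, (dvd_mul_left h g).trans hk⟩,
       fun ⟨h1, h2⟩ => hcop.mul_dvd h1 h2⟩⟩
  | succ n ih =>
    intro g h hdeg hg hh
    by_cases hcop : IsCoprime g h
    · exact ⟨g, h, dvd_rfl, dvd_rfl, hcop, fun k =>
        ⟨fun hk => ⟨(dvd_mul_right g h).trans hk, (dvd_mul_left h g).trans hk⟩,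
         fun ⟨h1, h2⟩ => hcop.mul_dvd h1 h2⟩⟩
    · obtain ⟨q, hq, hqg, hqh⟩ := common_prime hg hcop
      obtain ⟨a, g', hg', rfl⟩ := WfDvdMonoid.max_power_factor hg hq.irreducible
      obtain ⟨b, h', hh', rfl⟩ := WfDvdMonoid.max_power_factor hh hq.irreducible
      have hg'0 : g' ≠ 0 := fun h0 => hg (by rw [h0, mul_zero])
      have hh'0 : h' ≠ 0 := fun h0 => hh (by rw [h0, mul_zero])
      have ha : 1 ≤ a := by
        rcases Nat.eq_zero_or_pos a with h0 | h1
        · exfalso; apply hg'; simpa [h0] using hqg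
        · exact h1
      have hb : 1 ≤ b := by
        rcases Nat.eq_zero_or_pos b with h0 | h1
        · exfalso; apply hh'; simpa [h0] using hqh
        · exact h1
      have hdq : 0 < q.natDegree := deg_pos_of_prime hq
      rcases le_or_gt b a with hba | hab
      · -- recurse on (g, h')
        have hdeg' : (q ^ a * g').natDegree + h'.natDegree ≤ n := by
          have h1 : (q ^ b * h').natDegree = b * q.natDegree + h'.natDegree := by
            rw [Polynomial.natDegree_mul (pow_ne_zero _ hq.ne_zero) hh'0,
              Polynomial.natDegree_pow]
          have : h'.natDegree < (q ^ b * h').natDegree := by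
            rw [h1]; nlinarith
          omega
        obtain ⟨g₁, h₁, hd1, hd2, hco, hiff⟩ := ih (q ^ a * g') h' hdeg' hg hh'0
        refine ⟨g₁, h₁, hd1, hd2.trans ⟨q ^ b, mul_comm _ _⟩, hco, fun k => ?_⟩
        rw [hiff k]
        constructor
        · rintro ⟨hk1, hk2⟩
          refine ⟨hk1, ?_⟩
          have hqb : (q ^ b : K[X]) ∣ k :=
            ((pow_dvd_pow q hba).trans (dvd_mul_right _ _)).trans hk1
          exact (prime_pow_coprime hq hh'0 hh' b).mul_dvd hqb hk2
        · rintro ⟨hk1, hk2⟩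
          exact ⟨hk1, (dvd_mul_left h' (q ^ b)).trans hk2⟩
      · -- recurse on (g', h)
        have hdeg' : g'.natDegree + (q ^ b * h').natDegree ≤ n := by
          have h1 : (q ^ a * g').natDegree = a * q.natDegree + g'.natDegree := by
            rw [Polynomial.natDegree_mul (pow_ne_zero _ hq.ne_zero) hg'0,
              Polynomial.natDegree_pow]
          have : g'.natDegree < (q ^ a * g').natDegree := by
            rw [h1]; nlinarith
          omega
        obtain ⟨g₁, h₁, hd1, hd2, hco, hiff⟩ := ih g' (q ^ b * h') hdeg' hg'0 hh
        refine ⟨g₁, h₁, hd1.trans ⟨q ^ a, mul_comm _ _⟩, hd2, hco, fun k => ?_⟩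
        rw [hiff k]
        constructor
        · rintro ⟨hk1, hk2⟩
          refine ⟨?_, hk2⟩
          have hqa : (q ^ a : K[X]) ∣ k :=
            ((pow_dvd_pow q (le_of_lt hab)).trans (dvd_mul_right _ _)).trans hk2
          exact (prime_pow_coprime hq hg'0 hg' a).mul_dvd hqa hk1
        · rintro ⟨hk1, hk2⟩
          exact ⟨(dvd_mul_left g' (q ^ a)).trans hk1, hk2⟩

lemma split {K : Type*} [Field K] (g h : K[X]) (hg : g ≠ 0) (hh : h ≠ 0) :
    ∃ g₁ h₁ : K[X], g₁ ∣ g ∧ h₁ ∣ h ∧ IsCoprime g₁ h₁ ∧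
      ∀ k : K[X], g₁ * h₁ ∣ k ↔ g ∣ k ∧ h ∣ k :=
  split_aux (g.natDegree + h.natDegree) g h le_rfl hg hh

open Polynomial

section Core
variable {p : ℕ} {V : Type*} [AddCommGroup V]

lemma period_char (σ : V ≃+ V) (x : V) (s : ℕ)
    (hs : IsLeast {k | 0 < k ∧ (⇑σ)^[k] x = x} s) :
    ∀ k, (⇑σ)^[k] x = x ↔ s ∣ k := by
  have hper : x ∈ Function.periodicPts ⇑σ := ⟨s, hs.1.1, hs.1.2⟩
  have h1 : Function.minimalPeriod ⇑σ x = s := by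
    apply le_antisymm
    · exact Function.IsPeriodicPt.minimalPeriod_le hs.1.1 hs.1.2
    · exact hs.2 ⟨Function.minimalPeriod_pos_of_mem_periodicPts hper,
        Function.isPeriodicPt_minimalPeriod ⇑σ x⟩
  intro k
  rw [← h1]
  exact Function.isPeriodicPt_iff_minimalPeriod_dvd

lemma core (hp : p.Prime) (hV : ∀ x : V, p • x = 0) (σ : V ≃+ V) (u v : V) (s t : ℕ)
    (hs : IsLeast {k | 0 < k ∧ (⇑σ)^[k] u = u} s)
    (ht : IsLeast {k | 0 < k ∧ (⇑σ)^[k] v = v} t) :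
    ∃ w : V, IsLeast {k | 0 < k ∧ (⇑σ)^[k] w = w} (Nat.lcm s t) := by
  haveI := Fact.mk hp
  haveI : Module (ZMod p) V := AddCommGroup.zmodModule hV
  let σl : V →ₗ[ZMod p] V := σ.toAddMonoidHom.toZModLinearMap p
  have hσl : ∀ (k : ℕ) (x : V), Polynomial.aeval σl (X ^ k : (ZMod p)[X]) x
      = (⇑σ)^[k] x := by
    intro k x
    rw [Polynomial.aeval_X_pow, Module.End.pow_apply]
    rfl
  have hmul : ∀ (g h : (ZMod p)[X]) (x : V),
      Polynomial.aeval σl (g * h) x = Polynomial.aeval σl g (Polynomial.aeval σl h x) := by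
    intro g h x
    rw [map_mul]
    rfl
  have hXk : ∀ (x : V) (k : ℕ),
      Polynomial.aeval σl (X ^ k - 1 : (ZMod p)[X]) x = 0 ↔ (⇑σ)^[k] x = x := by
    intro x k
    rw [map_sub, map_one, LinearMap.sub_apply, hσl, Module.End.one_apply, sub_eq_zero]
  -- annihilator ideals
  let ann : V → Ideal (ZMod p)[X] := fun x =>
    { carrier := {g | Polynomial.aeval σl g x = 0}
      add_mem' := fun {g h} hg hh => by
        simp only [Set.mem_setOf_eq] at *
        rw [map_add, LinearMap.add_apply, hg, hh, add_zero]
      zero_mem' := by simp only [Set.mem_setOf_eq, map_zero]; rfl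
      smul_mem' := fun c g hg => by
        simp only [Set.mem_setOf_eq, smul_eq_mul] at *
        rw [hmul, hg, map_zero] }
  have hmem : ∀ (x : V) (g : (ZMod p)[X]),
      g ∈ ann x ↔ Submodule.IsPrincipal.generator (ann x) ∣ g := fun x g =>
    Submodule.IsPrincipal.mem_iff_generator_dvd (ann x)
  set μ := Submodule.IsPrincipal.generator (ann u) with hμdef
  set ν := Submodule.IsPrincipal.generator (ann v) with hνdef
  have hsu := period_char σ u s hs
  have htv := period_char σ v t ht
  have hμdvd : ∀ k : ℕ, μ ∣ X ^ k - 1 ↔ s ∣ k := by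
    intro k
    rw [← hmem, ← hsu k]
    exact hXk u k
  have hνdvd : ∀ k : ℕ, ν ∣ X ^ k - 1 ↔ t ∣ k := by
    intro k
    rw [← hmem, ← htv k]
    exact hXk v k
  have hXs : (X ^ s - 1 : (ZMod p)[X]) ≠ 0 := by
    have := Polynomial.X_pow_sub_C_ne_zero hs.1.1 (1 : ZMod p)
    simpa using this
  have hXt : (X ^ t - 1 : (ZMod p)[X]) ≠ 0 := by
    have := Polynomial.X_pow_sub_C_ne_zero ht.1.1 (1 : ZMod p)
    simpa using this
  have hμ0 : μ ≠ 0 := by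
    intro h0
    exact hXs (zero_dvd_iff.mp (h0 ▸ (hμdvd s).2 dvd_rfl))
  have hν0 : ν ≠ 0 := by
    intro h0
    exact hXt (zero_dvd_iff.mp (h0 ▸ (hνdvd t).2 dvd_rfl))
  obtain ⟨g₁, h₁, hd1, hd2, hco, hiff⟩ := split μ ν hμ0 hν0
  obtain ⟨d, hdd⟩ := hd1
  obtain ⟨e, hee⟩ := hd2
  have hd0 : d ≠ 0 := fun h0 => hμ0 (by rw [hdd, h0, mul_zero])
  have he0 : e ≠ 0 := fun h0 => hν0 (by rw [hee, h0, mul_zero])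
  set u' := Polynomial.aeval σl d u with hu'
  set v' := Polynomial.aeval σl e v with hv'
  have annu' : ∀ g : (ZMod p)[X], Polynomial.aeval σl g u' = 0 ↔ g₁ ∣ g := by
    intro g
    rw [hu', ← hmul]
    rw [show Polynomial.aeval σl (g * d) u = 0 ↔ (g * d) ∈ ann u from Iff.rfl, hmem,
      ← hμdef, hdd]
    exact mul_dvd_mul_iff_right hd0
  have annv' : ∀ g : (ZMod p)[X], Polynomial.aeval σl g v' = 0 ↔ h₁ ∣ g := by
    intro g
    rw [hv', ← hmul]
    rw [show Polynomial.aeval σl (g * e) v = 0 ↔ (g * e) ∈ ann v from Iff.rfl, hmem,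
      ← hνdef, hee]
    exact mul_dvd_mul_iff_right he0
  refine ⟨u' + v', ?_⟩
  have annw : ∀ g : (ZMod p)[X], Polynomial.aeval σl g (u' + v') = 0 ↔ g₁ * h₁ ∣ g := by
    intro g
    constructor
    · intro hg
      have key : ∀ q : (ZMod p)[X], Polynomial.aeval σl (q * g) (u' + v') = 0 := by
        intro q
        rw [hmul, hg, map_zero]
      have hg1 : g₁ ∣ g := by
        have e2 : Polynomial.aeval σl (h₁ * g) v' = 0 :=
          (annv' _).2 (dvd_mul_right h₁ g)
        have e1 : Polynomial.aeval σl (h₁ * g) u' = 0 := by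
          have := key h₁
          rw [map_add, e2, add_zero] at this
          exact this
        exact hco.dvd_of_dvd_mul_left ((annu' _).1 e1)
      have hh1 : h₁ ∣ g := by
        have e2 : Polynomial.aeval σl (g₁ * g) u' = 0 :=
          (annu' _).2 (dvd_mul_right g₁ g)
        have e1 : Polynomial.aeval σl (g₁ * g) v' = 0 := by
          have := key g₁
          rw [map_add, e2, zero_add] at this
          exact this
        exact hco.symm.dvd_of_dvd_mul_left ((annv' _).1 e1)
      exact hco.mul_dvd hg1 hh1
    · intro hg
      have e1 : Polynomial.aeval σl g u' = 0 :=
        (annu' g).2 ((dvd_mul_right g₁ h₁).trans hg)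
      have e2 : Polynomial.aeval σl g v' = 0 :=
        (annv' g).2 ((dvd_mul_left h₁ g₁).trans hg)
      rw [map_add, e1, e2, add_zero]
  have hwchar : ∀ k : ℕ, (⇑σ)^[k] (u' + v') = u' + v' ↔ Nat.lcm s t ∣ k := by
    intro k
    rw [← hXk, annw, hiff, hμdvd, hνdvd]
    constructor
    · rintro ⟨h1, h2⟩; exact Nat.lcm_dvd h1 h2
    · intro h; exact ⟨(Nat.dvd_lcm_left s t).trans h, (Nat.dvd_lcm_right s t).trans h⟩
  have hlpos : 0 < Nat.lcm s t := Nat.lcm_pos hs.1.1 ht.1.1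
  exact ⟨⟨hlpos, (hwchar _).2 dvd_rfl⟩, fun k hk => Nat.le_of_dvd hk.1 ((hwchar k).1 hk.2)⟩

end Core
section Hard
variable {G : Type*} [AddCommGroup G]

lemma iterate_sub_mem_closure {f : G ≃+ G} {N : AddSubgroup G}
    (hfN : ∀ x, f x ∈ N ↔ x ∈ N) {u : G} {t : ℕ}
    (htu : (⇑f)^[t] u - u ∈ N) : ∀ j : ℕ, (⇑f)^[t * j] u - u ∈ N := by
  have hiterN : ∀ (k : ℕ) (x : G), x ∈ N → (⇑f)^[k] x ∈ N := by
    intro k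
    induction k with
    | zero => intro x hx; exact hx
    | succ k ih => intro x hx
                   rw [Function.iterate_succ_apply']
                   exact (hfN _).2 (ih x hx)
  intro j
  induction j with
  | zero => simpa using N.zero_mem
  | succ j ih =>
    have heq : (⇑f)^[t * (j + 1)] u - u
        = ((⇑f)^[t * j] ((⇑f)^[t] u - u)) + ((⇑f)^[t * j] u - u) := by
      have hadd : ∀ (k : ℕ) (x y : G), (⇑f)^[k] (x - y) = (⇑f)^[k] x - (⇑f)^[k] y := by
        intro k
        induction k with
        | zero => intro x y; rfl
        | succ k ih => intro x y
                       rw [Function.iterate_succ_apply', Function.iterate_succ_apply',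
                         Function.iterate_succ_apply', ih, map_sub]
      have h1 : (⇑f)^[t * (j + 1)] u = (⇑f)^[t * j] ((⇑f)^[t] u) := by
        rw [← Function.iterate_add_apply]
        congr 1
      rw [h1, hadd]
      abel
    rw [heq]
    exact N.add_mem (hiterN _ _ htu) ih

lemma hard (p : ℕ) (hp : p.Prime) (f : G ≃+ G) (N : AddSubgroup G)
    (hfN : ∀ x, f x ∈ N ↔ x ∈ N) (c : ℕ)
    (hc : IsGreatest {t | ∃ u, p • u ∈ N ∧
      IsLeast {t' | 0 < t' ∧ (⇑f)^[t'] u - u ∈ N} t} c)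
    (u : G) (hu : p • u ∈ N) (t : ℕ)
    (ht : IsLeast {t' | 0 < t' ∧ (⇑f)^[t'] u - u ∈ N} t) : t ∣ c := by
  classical
  -- the quotient
  have hmap : AddSubgroup.map (AddEquiv.toAddMonoidHom f) N = N := by
    ext y
    simp only [AddSubgroup.mem_map]
    constructor
    · rintro ⟨x, hx, rfl⟩
      exact (hfN x).2 hx
    · intro hy
      refine ⟨f.symm y, ?_, by simp⟩
      have := hfN (f.symm y)
      rw [AddEquiv.apply_symm_apply] at this
      exact this.1 hy
  let σQ : (G ⧸ N) ≃+ (G ⧸ N) := QuotientAddGroup.congr N N f hmap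
  have hσQmk : ∀ x : G, σQ (QuotientAddGroup.mk x) = QuotientAddGroup.mk (f x) :=
    fun x => rfl
  -- the p-torsion subgroup of the quotient
  let T : AddSubgroup (G ⧸ N) :=
    { carrier := {y | p • y = 0}
      add_mem' := fun {a b} ha hb => by
        simp only [Set.mem_setOf_eq] at *
        rw [smul_add, ha, hb, add_zero]
      zero_mem' := by simp
      neg_mem' := fun {a} ha => by
        simp only [Set.mem_setOf_eq] at *
        rw [smul_neg, ha, neg_zero] }
  have hTmem : ∀ y : G ⧸ N, y ∈ T ↔ p • y = 0 := fun _ => Iff.rfl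
  have hσQT : ∀ y : G ⧸ N, p • y = 0 → p • σQ y = 0 := by
    intro y hy
    rw [← map_nsmul, hy, map_zero]
  have hσQT' : ∀ y : G ⧸ N, p • y = 0 → p • σQ.symm y = 0 := by
    intro y hy
    rw [← map_nsmul, hy, map_zero]
  let σT : T ≃+ T :=
    { toFun := fun y => ⟨σQ y, hσQT y y.2⟩
      invFun := fun y => ⟨σQ.symm y, hσQT' y y.2⟩
      left_inv := fun y => by
        ext; simp
      right_inv := fun y => by
        ext; simp
      map_add' := fun y z => by
        ext; simp }
  have hσTcoe : ∀ (k : ℕ) (x : T), (((⇑σT)^[k] x : T) : G ⧸ N) = (⇑σQ)^[k] (x : G ⧸ N) := by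
    intro k
    induction k with
    | zero => intro x; rfl
    | succ k ih => intro x
                   rw [Function.iterate_succ_apply', Function.iterate_succ_apply', ← ih]
                   rfl
  have hmkiter : ∀ (k : ℕ) (x : G),
      (⇑σQ)^[k] (QuotientAddGroup.mk x) = QuotientAddGroup.mk ((⇑f)^[k] x) := by
    intro k
    induction k with
    | zero => intro x; rfl
    | succ k ih => intro x
                   rw [Function.iterate_succ_apply', Function.iterate_succ_apply', ih, hσQmk]
  -- transfer
  have hTelt : ∀ x : G, p • x ∈ N → p • (QuotientAddGroup.mk x : G ⧸ N) = 0 := by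
    intro x hx
    rw [← QuotientAddGroup.mk_nsmul]
    exact (QuotientAddGroup.eq_zero_iff _).2 hx
  have hperiod : ∀ (x : G) (hx : p • (QuotientAddGroup.mk x : G ⧸ N) = 0) (k : ℕ),
      ((⇑σT)^[k] (⟨QuotientAddGroup.mk x, hx⟩ : T) = ⟨QuotientAddGroup.mk x, hx⟩)
        ↔ (⇑f)^[k] x - x ∈ N := by
    intro x hx k
    rw [Subtype.ext_iff, hσTcoe, hmkiter]
    exact QuotientAddGroup.eq_iff_sub_mem
  -- the greatest element c comes with a witness
  obtain ⟨u₀, hu₀, hcleast⟩ := hc.1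
  have hcpos : 0 < c := hcleast.1.1
  have htpos : 0 < t := ht.1.1
  -- move u and u₀ into T
  have hxu := hTelt u hu
  have hxu₀ := hTelt u₀ hu₀
  have hTu : IsLeast {k | 0 < k ∧ (⇑σT)^[k] (⟨QuotientAddGroup.mk u, hxu⟩ : T)
      = ⟨QuotientAddGroup.mk u, hxu⟩} t := by
    constructor
    · exact ⟨htpos, (hperiod u hxu t).2 ht.1.2⟩
    · intro k hk
      exact ht.2 ⟨hk.1, (hperiod u hxu k).1 hk.2⟩
  have hTu₀ : IsLeast {k | 0 < k ∧ (⇑σT)^[k] (⟨QuotientAddGroup.mk u₀, hxu₀⟩ : T)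
      = ⟨QuotientAddGroup.mk u₀, hxu₀⟩} c := by
    constructor
    · exact ⟨hcpos, (hperiod u₀ hxu₀ c).2 hcleast.1.2⟩
    · intro k hk
      exact hcleast.2 ⟨hk.1, (hperiod u₀ hxu₀ k).1 hk.2⟩
  have hT : ∀ x : T, p • x = 0 := fun x => Subtype.ext x.2
  obtain ⟨w, hw⟩ := core hp hT σT _ _ t c hTu hTu₀
  -- lift w back to G
  obtain ⟨w', hw'⟩ := QuotientAddGroup.mk_surjective (w : G ⧸ N)
  have hpw' : p • w' ∈ N := by
    have : p • (QuotientAddGroup.mk w' : G ⧸ N) = 0 := by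
      rw [hw']; exact w.2
    rw [← QuotientAddGroup.mk_nsmul] at this
    exact (QuotientAddGroup.eq_zero_iff _).1 this
  have hweq : (⟨QuotientAddGroup.mk w', hTelt w' hpw'⟩ : T) = w := Subtype.ext hw'
  have hlcm : (Nat.lcm t c) ∈ {t | ∃ u, p • u ∈ N ∧
      IsLeast {t' | 0 < t' ∧ (⇑f)^[t'] u - u ∈ N} t} := by
    refine ⟨w', hpw', ?_⟩
    constructor
    · exact ⟨hw.1.1, (hperiod w' (hTelt w' hpw') _).1 (by rw [hweq]; exact hw.1.2)⟩
    · intro k hk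
      have hkk := (hperiod w' (hTelt w' hpw') k).2 hk.2
      rw [hweq] at hkk
      exact hw.2 ⟨hk.1, hkk⟩
  have hle : Nat.lcm t c ≤ c := hc.2 hlcm
  have hge : c ≤ Nat.lcm t c := Nat.le_of_dvd (Nat.lcm_pos htpos hcpos) (Nat.dvd_lcm_right t c)
  have : Nat.lcm t c = c := le_antisymm hle hge
  calc t ∣ Nat.lcm t c := Nat.dvd_lcm_left t c
  _ = c := this

end Hard


theorem stmt_9 (p : ℕ) (hp : p.Prime) (m : ℕ) (hm : 0 < m)
    (a : Fin m → ℕ) (ha1 : ∀ i, 1 ≤ a i) (hmono : Monotone a)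
    (f : ((i : Fin m) → ZMod (p ^ a i)) ≃+ ((i : Fin m) → ZMod (p ^ a i)))
    (Mtor : ℕ → AddSubgroup ((i : Fin m) → ZMod (p ^ a i)))
    (hMtor : ∀ i v, v ∈ Mtor i ↔ p ^ i • v = 0)
    (A : ℕ) (hA : A = a ⟨m - 1, by omega⟩)
    (c : ℕ → ℕ)
    -- `c i` is the maximal cycle length of the automorphism induced by `f`
    -- on the quotient `Mtor i / Mtor (i-1)`, where the cycle length of the image
    -- of `u ∈ Mtor i` is the least positive `t` with `f^[t] u ≡ u mod Mtor (i-1)`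
    (hc : ∀ i, 1 ≤ i → i ≤ A →
      IsGreatest {t | ∃ u ∈ Mtor i,
        IsLeast {t' | 0 < t' ∧ (⇑f)^[t'] u - u ∈ Mtor (i - 1)} t} (c i)) :
    ∀ u : (i : Fin m) → ZMod (p ^ a i),
      Function.minimalPeriod (⇑f) u ∣ p ^ (A - 1) * (Finset.Icc 1 A).lcm c := by
  classical
  intro u
  haveI hNZ : ∀ i : Fin m, NeZero (p ^ a i) := fun i => ⟨pow_ne_zero _ hp.ne_zero⟩
  haveI : Finite ((i : Fin m) → ZMod (p ^ a i)) := by infer_instance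
  -- a global period for f
  obtain ⟨n, hn, hfn⟩ : ∃ n, 0 < n ∧ ∀ x, (⇑f)^[n] x = x := by
    obtain ⟨k, l, hkl, heq⟩ := Finite.exists_ne_map_eq_of_infinite
      (fun k : ℕ => ((⇑f)^[k] : ((i : Fin m) → ZMod (p ^ a i)) → _))
    rcases lt_or_gt_of_ne hkl with h | h
    · refine ⟨l - k, by omega, fun x => ?_⟩
      have h2 : (⇑f)^[k] ((⇑f)^[l - k] x) = (⇑f)^[k] x := by
        rw [← Function.iterate_add_apply]
        have h3 : k + (l - k) = l := by omega
        rw [h3]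
        exact congrFun heq.symm x
      exact (f.injective.iterate k) h2
    · refine ⟨k - l, by omega, fun x => ?_⟩
      have h2 : (⇑f)^[l] ((⇑f)^[k - l] x) = (⇑f)^[l] x := by
        rw [← Function.iterate_add_apply]
        have h3 : l + (k - l) = k := by omega
        rw [h3]
        exact congrFun heq x
      exact (f.injective.iterate l) h2
  -- M = Mtor A
  have hexp : ∀ v : (i : Fin m) → ZMod (p ^ a i), v ∈ Mtor A := by
    intro v
    rw [hMtor]
    funext i
    rw [Pi.smul_apply, Pi.zero_apply]
    have hle : a i ≤ A := by
      rw [hA]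
      apply hmono
      have := i.isLt
      exact Fin.mk_le_mk.2 (by omega) |>.trans_eq rfl |> fun h => h
    obtain ⟨e, he⟩ : p ^ a i ∣ p ^ A := pow_dvd_pow p hle
    rw [he, mul_comm, mul_smul]
    have : (p ^ a i) • (v i) = 0 := by
      rw [nsmul_eq_mul]
      rw [ZMod.natCast_self, zero_mul]
    rw [this, smul_zero]
  -- basic facts about Mtor
  have hfMem : ∀ i (v : (i : Fin m) → ZMod (p ^ a i)), f v ∈ Mtor i ↔ v ∈ Mtor i := by
    intro i v
    rw [hMtor, hMtor, ← map_nsmul f]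
    exact EmbeddingLike.map_eq_zero_iff
  have hMem1 : ∀ i (v : (i : Fin m) → ZMod (p ^ a i)),
      v ∈ Mtor (i + 1) ↔ p • v ∈ Mtor i := by
    intro i v
    rw [hMtor, hMtor, smul_smul, ← pow_succ]
  set L := (Finset.Icc 1 A).lcm c with hL
  -- every level period divides c (i+1)
  have hstep : ∀ i, i + 1 ≤ A → ∀ v, v ∈ Mtor (i + 1) →
      ∀ t, IsLeast {t' | 0 < t' ∧ (⇑f)^[t'] v - v ∈ Mtor i} t → t ∣ c (i + 1) := by
    intro i hi v hv t htl
    have hgi := hc (i + 1) (by omega) hi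
    have hset : {t | ∃ u ∈ Mtor (i + 1),
        IsLeast {t' | 0 < t' ∧ (⇑f)^[t'] u - u ∈ Mtor (i + 1 - 1)} t}
        = {t | ∃ u, p • u ∈ Mtor i ∧
            IsLeast {t' | 0 < t' ∧ (⇑f)^[t'] u - u ∈ Mtor i} t} := by
      have h11 : i + 1 - 1 = i := by omega
      rw [h11]
      ext k
      constructor
      · rintro ⟨u', hu', hl⟩
        exact ⟨u', (hMem1 i u').1 hu', hl⟩
      · rintro ⟨u', hu', hl⟩
        exact ⟨u', (hMem1 i u').2 hu', hl⟩
    rw [hset] at hgi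
    exact hard p hp f (Mtor i) (hfMem i) (c (i + 1)) hgi v ((hMem1 i v).1 hv) t htl
  -- iterates are additive and commute with nsmul
  have hadditer : ∀ (k : ℕ) (x y : (i : Fin m) → ZMod (p ^ a i)),
      (⇑f)^[k] (x + y) = (⇑f)^[k] x + (⇑f)^[k] y := by
    intro k
    induction k with
    | zero => intro x y; rfl
    | succ k ih => intro x y
                   rw [Function.iterate_succ_apply', Function.iterate_succ_apply',
                     Function.iterate_succ_apply', ih, map_add]
  have hsmuliter : ∀ (k r : ℕ) (x : (i : Fin m) → ZMod (p ^ a i)),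
      (⇑f)^[k] (r • x) = r • (⇑f)^[k] x := by
    intro k r
    induction k with
    | zero => intro x; rfl
    | succ k ih => intro x
                   rw [Function.iterate_succ_apply', Function.iterate_succ_apply',
                     ih, map_nsmul]
  -- the key induction
  have hkey : ∀ i, i ≤ A → ∀ v, v ∈ Mtor i → (⇑f)^[p ^ (i - 1) * L] v = v := by
    intro i
    induction i with
    | zero =>
      intro _ v hv
      have hv0 : v = 0 := by
        rw [hMtor] at hv
        simpa using hv
      subst hv0
      exact Function.iterate_fixed (map_zero f) _
    | succ i ih =>
      intro hi v hv
      have hPne : (0 < n ∧ (⇑f)^[n] v - v ∈ Mtor i) := by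
        refine ⟨hn, ?_⟩
        rw [hfn v, sub_self]
        exact (Mtor i).zero_mem
      have hleast : IsLeast {t' | 0 < t' ∧ (⇑f)^[t'] v - v ∈ Mtor i}
          (sInf {t' | 0 < t' ∧ (⇑f)^[t'] v - v ∈ Mtor i}) :=
        ⟨Nat.sInf_mem ⟨n, hPne⟩, fun k hk => Nat.sInf_le hk⟩
      set t := sInf {t' | 0 < t' ∧ (⇑f)^[t'] v - v ∈ Mtor i} with htdef
      have htc : t ∣ c (i + 1) := hstep i hi v hv t hleast
      have htL : t ∣ L := htc.trans (Finset.dvd_lcm (Finset.mem_Icc.2 ⟨by omega, hi⟩))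
      have hmult : ∀ k, t ∣ k → (⇑f)^[k] v - v ∈ Mtor i := by
        intro k hk
        obtain ⟨j, rfl⟩ := hk
        exact iterate_sub_mem_closure (hfMem i) hleast.1.2 j
      rcases Nat.eq_zero_or_pos i with h0 | hipos
      · subst h0
        have hw := hmult L htL
        rw [hMtor] at hw
        simp only [pow_zero, one_smul] at hw
        have hgoal : p ^ (0 + 1 - 1) * L = L := by simp
        rw [hgoal]
        have := sub_eq_zero.1 hw
        exact this
      · have hL' : t ∣ p ^ (i - 1) * L := htL.trans (dvd_mul_left L _)
        have hwmem : (⇑f)^[p ^ (i - 1) * L] v - v ∈ Mtor i := hmult _ hL'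
        set w := (⇑f)^[p ^ (i - 1) * L] v - v with hwdef
        have hpv : p • v ∈ Mtor i := (hMem1 i v).1 hv
        have hpw : p • w = 0 := by
          rw [hwdef, smul_sub, ← hsmuliter, ih (by omega) _ hpv, sub_self]
        have hww : (⇑f)^[p ^ (i - 1) * L] w = w := ih (by omega) w hwmem
        have hfv : (⇑f)^[p ^ (i - 1) * L] v = v + w := by
          rw [hwdef]; abel
        have hiter : ∀ j : ℕ, ((⇑f)^[p ^ (i - 1) * L])^[j] v = v + j • w := by
          intro j
          induction j with
          | zero => simp
          | succ j ihj =>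
            rw [Function.iterate_succ_apply', ihj, hadditer, hsmuliter, hfv, hww,
              succ_nsmul]
            abel
        have hfinal := hiter p
        rw [← Function.iterate_mul, hpw, add_zero] at hfinal
        have hgoal : p ^ (i + 1 - 1) * L = p ^ (i - 1) * L * p := by
          have h1 : i + 1 - 1 = i := by omega
          have h2 : i = (i - 1) + 1 := by omega
          rw [h1]
          calc p ^ i * L = p ^ ((i - 1) + 1) * L := by rw [← h2]
          _ = p ^ (i - 1) * L * p := by rw [pow_succ]; ring
        rw [hgoal]
        exact hfinal
  have := hkey A le_rfl u (hexp u)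
  exact Function.IsPeriodicPt.minimalPeriod_dvd this
end

section
/- Let f be an automorphism of a finite-dimensional vector space V over a finite field F. Then f possesses a cycle of maximum length c such that the length of every cycle of f divides c. Equivalently, the order of f in GL(V) equals the maximal orbit length, and every element's orbit length divides it. -/
open Polynomial

-- coprime splitting lemma in R[X]
lemma split_aux_s10 {R : Type*} [Field R] :
    ∀ n : ℕ, ∀ a b : R[X], a.natDegree ≤ n → a ≠ 0 → b ≠ 0 →
    ∃ a' b' : R[X], a' ∣ a ∧ b' ∣ b ∧ IsCoprime a' b' ∧ a ∣ a' * b' ∧ b ∣ a' * b' := by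
  intro n
  induction n with
  | zero =>
    intro a b hdeg ha hb
    refine ⟨a, b, dvd_rfl, dvd_rfl, ?_, dvd_mul_right _ _, dvd_mul_left _ _⟩
    have h0 : a.natDegree = 0 := Nat.le_zero.mp hdeg
    have hC := eq_C_of_natDegree_eq_zero h0
    have hu : IsUnit a := by
      rw [hC]
      exact isUnit_C.mpr (isUnit_iff_ne_zero.mpr (fun h => ha (by rw [hC, h, map_zero])))
    obtain ⟨c, hc⟩ := hu.exists_left_inv
    exact ⟨c, 0, by rw [zero_mul, add_zero, hc]⟩
  | succ n ih =>
    intro a b hdeg ha hb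
    classical
    by_cases hco : IsCoprime a b
    · exact ⟨a, b, dvd_rfl, dvd_rfl, hco, dvd_mul_right _ _, dvd_mul_left _ _⟩
    · have hgcd_unit : ¬IsUnit (EuclideanDomain.gcd a b) := by
        intro h
        exact hco (EuclideanDomain.gcd_isUnit_iff.mp h)
      have hgcd_ne : EuclideanDomain.gcd a b ≠ 0 := by
        intro h
        exact ha (EuclideanDomain.gcd_eq_zero_iff.mp h).1
      obtain ⟨p, hp, hpd⟩ := WfDvdMonoid.exists_irreducible_factor hgcd_unit hgcd_ne
      have hpa : p ∣ a := hpd.trans (EuclideanDomain.gcd_dvd_left a b)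
      have hpb : p ∣ b := hpd.trans (EuclideanDomain.gcd_dvd_right a b)
      obtain ⟨i, a₀, hpa₀, haeq⟩ := WfDvdMonoid.max_power_factor ha hp
      obtain ⟨j, b₀, hpb₀, hbeq⟩ := WfDvdMonoid.max_power_factor hb hp
      have ha₀ : a₀ ≠ 0 := by rintro rfl; exact ha (by simpa using haeq)
      have hb₀ : b₀ ≠ 0 := by rintro rfl; exact hb (by simpa using hbeq)
      have hi : 1 ≤ i := by
        rcases Nat.eq_zero_or_pos i with rfl | h
        · rw [pow_zero, one_mul] at haeq
          exact absurd (by rwa [haeq] at hpa) hpa₀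
        · exact h
      have hdeg₀ : a₀.natDegree ≤ n := by
        have hple : 1 ≤ p.natDegree := hp.natDegree_pos
        have : a.natDegree = i * p.natDegree + a₀.natDegree := by
          rw [haeq, natDegree_mul (pow_ne_zero _ hp.ne_zero) ha₀, natDegree_pow]
        have h2 : 1 ≤ i * p.natDegree := le_trans (by norm_num) (Nat.mul_le_mul hi hple)
        omega
      obtain ⟨a'', b'', ha'', hb'', hcop, hd1, hd2⟩ := ih a₀ b₀ hdeg₀ ha₀ hb₀
      have hpa'' : ¬ p ∣ a'' := fun h => hpa₀ (h.trans ha'')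
      have hpb'' : ¬ p ∣ b'' := fun h => hpb₀ (h.trans hb'')
      rcases le_or_gt j i with hij | hij
      · refine ⟨p ^ i * a'', b'', ?_, hb''.trans ⟨p ^ j, by rw [hbeq, mul_comm]⟩, ?_, ?_, ?_⟩
        · rw [haeq]; exact mul_dvd_mul_left _ ha''
        · exact ((hp.coprime_iff_not_dvd.mpr hpb'').pow_left).mul_left hcop
        · rw [haeq, mul_assoc]; exact mul_dvd_mul_left _ hd1
        · rw [hbeq, mul_assoc]
          exact mul_dvd_mul (pow_dvd_pow p hij) hd2
      · refine ⟨a'', p ^ j * b'', ha''.trans ⟨p ^ i, by rw [haeq, mul_comm]⟩, ?_, ?_, ?_, ?_⟩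
        · rw [hbeq]; exact mul_dvd_mul_left _ hb''
        · exact IsCoprime.mul_right ((hp.coprime_iff_not_dvd.mpr hpa'').symm.pow_right) hcop
        · rw [haeq]
          calc p ^ i * a₀ ∣ p ^ j * a₀ := mul_dvd_mul (pow_dvd_pow p hij.le) dvd_rfl
          _ ∣ p ^ j * (a'' * b'') := mul_dvd_mul_left _ hd1
          _ = a'' * (p ^ j * b'') := by ring
        · rw [hbeq]
          calc p ^ j * b₀ ∣ p ^ j * (a'' * b'') := mul_dvd_mul_left _ hd2
          _ = a'' * (p ^ j * b'') := by ring

section Ann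

variable {F V : Type*} [Field F] [AddCommGroup V] [Module F V]

/-- annihilator ideal of a vector under an endomorphism -/
def annI (g : Module.End F V) (v : V) : Ideal F[X] where
  carrier := {p | aeval g p v = 0}
  add_mem' := by
    intro p q hp hq
    simp only [Set.mem_setOf_eq, map_add, LinearMap.add_apply] at *
    rw [hp, hq, add_zero]
  zero_mem' := by simp
  smul_mem' := by
    intro c p hp
    simp only [Set.mem_setOf_eq, smul_eq_mul, map_mul, Module.End.mul_apply] at *
    rw [hp, map_zero]

lemma mem_annI {g : Module.End F V} {v : V} {p : F[X]} :
    p ∈ annI g v ↔ aeval g p v = 0 := Iff.rfl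

variable [FiniteDimensional F V]

lemma annI_ne_bot (g : Module.End F V) (v : V) : annI g v ≠ ⊥ := by
  intro h
  have h1 : minpoly F g ∈ annI g v := by
    rw [mem_annI, minpoly.aeval, LinearMap.zero_apply]
  rw [h, Ideal.mem_bot] at h1
  exact minpoly.ne_zero_of_finite F g h1

lemma pair_lemma (g : Module.End F V) (v w : V) :
    ∃ u : V, annI g u ≤ annI g v ∧ annI g u ≤ annI g w := by
  classical
  set Iv := annI g v with hIv
  set Iw := annI g w with hIw
  set A := Submodule.IsPrincipal.generator Iv with hA
  set B := Submodule.IsPrincipal.generator Iw with hB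
  have hmemv : ∀ p : F[X], p ∈ Iv ↔ A ∣ p := fun p =>
    Submodule.IsPrincipal.mem_iff_generator_dvd Iv
  have hmemw : ∀ p : F[X], p ∈ Iw ↔ B ∣ p := fun p =>
    Submodule.IsPrincipal.mem_iff_generator_dvd Iw
  have hAne : A ≠ 0 := fun h =>
    annI_ne_bot g v ((Submodule.IsPrincipal.eq_bot_iff_generator_eq_zero Iv).mpr h)
  have hBne : B ≠ 0 := fun h =>
    annI_ne_bot g w ((Submodule.IsPrincipal.eq_bot_iff_generator_eq_zero Iw).mpr h)
  obtain ⟨A', B', hA'A, hB'B, hcop, hAd, hBd⟩ := split_aux_s10 A.natDegree A B le_rfl hAne hBne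
  obtain ⟨E1, hE1⟩ := hA'A
  obtain ⟨E2, hE2⟩ := hB'B
  have hE1ne : E1 ≠ 0 := fun h => hAne (by rw [hE1, h, mul_zero])
  have hE2ne : E2 ≠ 0 := fun h => hBne (by rw [hE2, h, mul_zero])
  set u1 := aeval g E1 v with hu1def
  set u2 := aeval g E2 w with hu2def
  have hu1 : ∀ p : F[X], aeval g p u1 = 0 ↔ A' ∣ p := by
    intro p
    have : aeval g p u1 = aeval g (p * E1) v := by
      rw [map_mul, Module.End.mul_apply]
    rw [this, ← mem_annI, ← hIv, hmemv, hE1]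
    constructor
    · intro h
      have := (mul_dvd_mul_iff_right hE1ne).mp h
      exact this
    · intro h
      exact mul_dvd_mul_right h E1
  have hu2 : ∀ p : F[X], aeval g p u2 = 0 ↔ B' ∣ p := by
    intro p
    have : aeval g p u2 = aeval g (p * E2) w := by
      rw [map_mul, Module.End.mul_apply]
    rw [this, ← mem_annI, ← hIw, hmemw, hE2]
    constructor
    · intro h
      exact (mul_dvd_mul_iff_right hE2ne).mp h
    · intro h
      exact mul_dvd_mul_right h E2
  refine ⟨u1 + u2, ?_, ?_⟩ <;>
  · intro p hp
    rw [mem_annI] at hp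
    have key1 : aeval g (B' * p) u1 = 0 := by
      have e1 : aeval g (B' * p) (u1 + u2) = 0 := by
        rw [map_mul, Module.End.mul_apply, hp, map_zero]
      have e2 : aeval g (B' * p) u2 = 0 := by
        rw [mul_comm, map_mul, Module.End.mul_apply, (hu2 B').mpr dvd_rfl, map_zero]
      rw [map_add] at e1
      rw [e2, add_zero] at e1
      exact e1
    have key2 : aeval g (A' * p) u2 = 0 := by
      have e1 : aeval g (A' * p) (u1 + u2) = 0 := by
        rw [map_mul, Module.End.mul_apply, hp, map_zero]
      have e2 : aeval g (A' * p) u1 = 0 := by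
        rw [mul_comm, map_mul, Module.End.mul_apply, (hu1 A').mpr dvd_rfl, map_zero]
      rw [map_add] at e1
      rw [e2, zero_add] at e1
      exact e1
    have hA'p : A' ∣ p := by
      have := (hu1 _).mp key1
      exact (hcop.dvd_of_dvd_mul_left this)
    have hB'p : B' ∣ p := by
      have := (hu2 _).mp key2
      exact (hcop.symm.dvd_of_dvd_mul_left this)
    have hABp : A' * B' ∣ p := hcop.mul_dvd hA'p hB'p
    first
    | (rw [hmemv]; exact hAd.trans hABp)
    | (rw [hmemw]; exact hBd.trans hABp)

end Ann

theorem stmt_10 {F V : Type*} [Field F] [Fintype F] [AddCommGroup V] [Module F V]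
    [FiniteDimensional F V] (f : V ≃ₗ[F] V) :
    ∃ c : ℕ, 0 < c ∧
      (∃ v : V, Function.minimalPeriod (⇑f) v = c) ∧
      (∀ v : V, Function.minimalPeriod (⇑f) v ∣ c) ∧
      orderOf f = c := by
  classical
  have hVfin : Finite V := Module.finite_of_finite F
  have hEfin : Finite (V ≃ₗ[F] V) :=
    Finite.of_injective (fun e => (e : V → V)) DFunLike.coe_injective
  set g : Module.End F V := f.toLinearMap with hg
  -- iterate vs aeval
  have hiter : ∀ (n : ℕ) (w : V), (⇑f)^[n] w = (g ^ n) w := by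
    intro n w
    rw [Module.End.pow_apply]
    rfl
  have hann : ∀ (w : V) (n : ℕ), ((X : F[X]) ^ n - 1) ∈ annI g w ↔ (⇑f)^[n] w = w := by
    intro w n
    rw [mem_annI, map_sub, map_one, map_pow, aeval_X, LinearMap.sub_apply,
      Module.End.one_apply, sub_eq_zero, hiter]
  -- dominant vector
  have main : ∃ u : V, ∀ w : V, annI g u ≤ annI g w := by
    have hfin : ∀ s : Finset V, ∃ u : V, ∀ w ∈ s, annI g u ≤ annI g w := by
      intro s
      induction s using Finset.induction with
      | empty => exact ⟨0, by simp⟩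
      | @insert a s' hx ih =>
        obtain ⟨u, hu⟩ := ih
        obtain ⟨u', h1, h2⟩ := pair_lemma g u a
        refine ⟨u', fun w hw => ?_⟩
        rcases Finset.mem_insert.mp hw with rfl | hw'
        · exact h2
        · exact h1.trans (hu w hw')
    haveI : Fintype V := Fintype.ofFinite V
    obtain ⟨u, hu⟩ := hfin Finset.univ
    exact ⟨u, fun w => hu w (Finset.mem_univ w)⟩
  obtain ⟨u, hu⟩ := main
  set N := orderOf f with hN
  have hNpos : 0 < N := orderOf_pos f
  have hfN : ∀ w : V, (⇑f)^[N] w = w := by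
    intro w
    have : f ^ N = 1 := pow_orderOf_eq_one f
    have := congrArg (fun e : V ≃ₗ[F] V => e w) this
    simpa [LinearEquiv.pow_apply] using this
  have hperN : ∀ w : V, Function.minimalPeriod (⇑f) w ∣ N := by
    intro w
    exact Function.IsPeriodicPt.minimalPeriod_dvd (hfN w)
  set m := Function.minimalPeriod (⇑f) u with hm
  have hmpos : 0 < m := Function.IsPeriodicPt.minimalPeriod_pos hNpos (hfN u)
  have hmu : (⇑f)^[m] u = u := Function.iterate_minimalPeriod
  have hfm : f ^ m = 1 := by
    apply LinearEquiv.ext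
    intro w
    have : ((X : F[X]) ^ m - 1) ∈ annI g w := hu w ((hann u m).mpr hmu)
    have := (hann w m).mp this
    simpa [LinearEquiv.pow_apply] using this
  have hNm : N ∣ m := orderOf_dvd_of_pow_eq_one hfm
  have hmN : m = N := Nat.dvd_antisymm (hperN u) hNm
  exact ⟨N, hNpos, ⟨u, hmN⟩, hperN, rfl⟩
end

section
/- Let p be a prime, a, m positive integers, M = ℤ_{p^a}^m, and f : M → M an automorphism. Let M_{a−1} be the p^{a−1}-torsion subgroup and let c be the maximum cycle length of the automorphism induced by f on M/M_{a−1} ≅ ℤ_p^m. Then every cycle length of f divides p^{a−1} c. -/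
/-!
On `V = M / M_{a-1}`, a vector space over `𝔽_p`, the induced map `g` has a vector whose
annihilator in `𝔽_p[X]` is the whole annihilator of `V` (structure theorem over a PID). Hence some
point has minimal period `orderOf g`, every period divides it, and so the maximal cycle length is
`c = orderOf g`: `f^c ≡ 1` modulo `M_{a-1} = p M`. Since `M` is free over `ℤ/p^a`, this gives
`f^c = 1 + p h` for an endomorphism `h`, and `(1 + p h)^(p^(a-1)) = 1` because
`p^a ∣ (1 + p X)^(p^(a-1)) - 1` in `ℤ[X]` and `p^a = 0` on `M`.
-/

open Polynomial Function

theorem Function.isLeast_minimalPeriod {α : Type*} {f : α → α} {x : α} (hx : x ∈ periodicPts f) :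
    IsLeast {n | 0 < n ∧ IsPeriodicPt f n x} (minimalPeriod f x) :=
  ⟨⟨minimalPeriod_pos_of_mem_periodicPts hx, isPeriodicPt_minimalPeriod f x⟩,
    fun _ hn => hn.2.minimalPeriod_le hn.1⟩

namespace Module.End

variable {K V : Type*} [Field K] [AddCommGroup V] [Module K V]

theorem isPeriodicPt_orderOf (g : Module.End K V) (x : V) : IsPeriodicPt g (orderOf g) x := by
  rw [IsPeriodicPt, IsFixedPt, ← coe_pow, pow_orderOf_eq_one, one_apply]

variable [FiniteDimensional K V]

theorem exists_forall_aeval_eq_zero_of_aeval_apply_eq_zero (g : Module.End K V) :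
    ∃ z : V, ∀ q : K[X], aeval g q z = 0 → aeval g q = 0 := by
  have : Module.Finite K[X] (AEval' g) := .of_restrictScalars_finite K _ _
  obtain ⟨z, hz⟩ := Module.exists_ker_toSpanSingleton_eq_annihilator K[X] (AEval' g)
  have of_smul (q : K[X]) (v : V) : q • AEval'.of g v = AEval'.of g (aeval g q v) :=
    (AEval.of_aeval_smul g q v).symm
  refine ⟨(AEval'.of g).symm z, fun q hq => LinearMap.ext fun v => ?_⟩
  have hq' : q ∈ Module.annihilator K[X] (AEval' g) := by
    rw [← hz, LinearMap.mem_ker, LinearMap.toSpanSingleton_apply,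
      ← (AEval'.of g).apply_symm_apply z, of_smul, hq, map_zero]
  simpa [of_smul] using Module.mem_annihilator.1 hq' (AEval'.of g v)

theorem exists_minimalPeriod_eq_orderOf (g : Module.End K V) :
    ∃ z : V, minimalPeriod g z = orderOf g := by
  obtain ⟨z, hz⟩ := g.exists_forall_aeval_eq_zero_of_aeval_apply_eq_zero
  refine ⟨z, Nat.dvd_antisymm (g.isPeriodicPt_orderOf z).minimalPeriod_dvd
    (orderOf_dvd_of_pow_eq_one ?_)⟩
  have h := hz (X ^ minimalPeriod g z - 1) (by simp [coe_pow, iterate_minimalPeriod])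
  simpa [sub_eq_zero] using h

theorem pow_eq_one_of_isGreatest {g : Module.End K V} (hg : ∀ x, x ∈ periodicPts g) {c : ℕ}
    (hc : IsGreatest {t | ∃ x, IsLeast {n | 0 < n ∧ IsPeriodicPt g n x} t} c) :
    g ^ c = 1 := by
  obtain ⟨z, hz⟩ := g.exists_minimalPeriod_eq_orderOf
  obtain ⟨u, hu⟩ := hc.1
  have hcu : c = minimalPeriod g u := hu.unique (isLeast_minimalPeriod (hg u))
  have hle : orderOf g ≤ c := hc.2 ⟨z, hz ▸ isLeast_minimalPeriod (hg z)⟩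
  have hpos : 0 < orderOf g := hz ▸ minimalPeriod_pos_of_mem_periodicPts (hg z)
  have hdvd : c ∣ orderOf g := hcu ▸ (g.isPeriodicPt_orderOf u).minimalPeriod_dvd
  rw [← le_antisymm hle (Nat.le_of_dvd hpos hdvd), pow_orderOf_eq_one]

end Module.End

theorem AddEquiv.iterate_sub_mem_of_isGreatest {G : Type*} [AddCommGroup G] [Finite G] {p : ℕ}
    [Fact p.Prime] {N : AddSubgroup G} (hpN : ∀ x, p • x ∈ N) {f : G ≃+ G}
    (hfN : ∀ x ∈ N, f x ∈ N) {c : ℕ}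
    (hc : IsGreatest {t | ∃ u, IsLeast {n | 0 < n ∧ f^[n] u - u ∈ N} t} c) (u : G) :
    f^[c] u - u ∈ N := by
  have := QuotientAddGroup.zmodModule hpN
  let g : Module.End (ZMod p) (G ⧸ N) :=
    (QuotientAddGroup.map N N f.toAddMonoidHom hfN).toZModLinearMap p
  have hsemi : Semiconj ((↑) : G → G ⧸ N) f g := fun x =>
    (QuotientAddGroup.map_mk N N f.toAddMonoidHom hfN x).symm
  have hper (n : ℕ) (x : G) : IsPeriodicPt g n x ↔ f^[n] x - x ∈ N := by
    rw [IsPeriodicPt, IsFixedPt, ← hsemi.iterate_right n x, QuotientAddGroup.eq_iff_sub_mem]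
  have hg : ∀ y, y ∈ periodicPts g := by
    refine QuotientAddGroup.mk_surjective.forall.2 fun x => ?_
    obtain ⟨n, hn, hx⟩ := f.injective.mem_periodicPts x
    exact ⟨n, hn, (hper n x).2 (by rw [hx.eq, sub_self]; exact N.zero_mem)⟩
  have hc' : IsGreatest {t | ∃ y, IsLeast {n | 0 < n ∧ IsPeriodicPt g n y} t} c := by
    simpa only [QuotientAddGroup.mk_surjective.exists, hper] using hc
  rw [← hper, IsPeriodicPt, IsFixedPt, ← Module.End.coe_pow,
    Module.End.pow_eq_one_of_isGreatest hg hc', Module.End.one_apply]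

theorem ZMod.exists_eq_mul_of_pow_mul_eq_zero {p k : ℕ} [NeZero p] {x : ZMod (p ^ (k + 1))}
    (hx : (p : ZMod (p ^ (k + 1))) ^ k * x = 0) : ∃ y, x = p * y := by
  have hdvd : p ^ k * p ∣ p ^ k * x.val := by
    rw [← pow_succ, ← ZMod.natCast_eq_zero_iff]
    simpa using hx
  obtain ⟨y, hy⟩ := Nat.dvd_of_mul_dvd_mul_left (pow_pos (NeZero.pos p) k) hdvd
  exact ⟨y, by rw [← ZMod.natCast_zmod_val x, hy, Nat.cast_mul]⟩

theorem ZMod.exists_eq_smul_of_pow_nsmul_eq_zero {ι : Type*} {p k : ℕ} [NeZero p]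
    {v : ι → ZMod (p ^ (k + 1))} (hv : p ^ k • v = 0) :
    ∃ w, v = (p : ZMod (p ^ (k + 1))) • w := by
  choose w hw using fun i => ZMod.exists_eq_mul_of_pow_mul_eq_zero (x := v i)
    (by simpa [nsmul_eq_mul] using congrFun hv i)
  exact ⟨w, funext hw⟩

theorem Module.Basis.exists_eq_smul_of_forall_exists {ι R M N : Type*} [CommSemiring R]
    [AddCommMonoid M] [Module R M] [AddCommMonoid N] [Module R N] (b : Module.Basis ι R M)
    (d : M →ₗ[R] N) (r : R) (hd : ∀ i, ∃ w, d (b i) = r • w) :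
    ∃ h : M →ₗ[R] N, d = r • h := by
  choose w hw using hd
  exact ⟨b.constr R w, b.ext fun i => by simp [hw, b.constr_basis]⟩

theorem one_add_natCast_mul_pow_pow_eq_one {S : Type*} [Ring S] {p k : ℕ}
    (hS : (p : S) ^ (k + 1) = 0) (h : S) : (1 + p * h) ^ p ^ k = 1 := by
  obtain ⟨q, hq⟩ := dvd_sub_pow_of_dvd_sub (R := ℤ[X]) (p := p) (a := 1 + (p : ℤ[X]) * X)
    (b := 1) (by simp) k
  simpa [hS, sub_eq_zero] using congrArg (aeval h) hq

theorem stmt_11_general (p : ℕ) (hp : p.Prime) (a m : ℕ) (ha : 1 ≤ a)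
    (f : (Fin m → ZMod (p ^ a)) ≃+ (Fin m → ZMod (p ^ a)))
    (Mtor : ℕ → AddSubgroup (Fin m → ZMod (p ^ a)))
    (hMtor : ∀ i v, v ∈ Mtor i ↔ p ^ i • v = 0)
    (c : ℕ)
    -- `c` is the maximal cycle length of the automorphism induced by `f` on
    -- `M / Mtor (a-1) ≅ (ℤ/p)^m`, where the cycle length of the image of `u`
    -- is the least positive `t` with `f^[t] u ≡ u mod Mtor (a-1)`
    (hc : IsGreatest {t | ∃ u : Fin m → ZMod (p ^ a),
      IsLeast {t' | 0 < t' ∧ (⇑f)^[t'] u - u ∈ Mtor (a - 1)} t} c) :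
    ∀ u : Fin m → ZMod (p ^ a),
      Function.minimalPeriod (⇑f) u ∣ p ^ (a - 1) * c := by
  obtain ⟨k, rfl⟩ : ∃ k, a = k + 1 := ⟨a - 1, by omega⟩
  rw [Nat.add_sub_cancel] at hc ⊢
  have : Fact p.Prime := ⟨hp⟩
  have hchar : (p : ZMod (p ^ (k + 1))) ^ (k + 1) = 0 := by exact_mod_cast ZMod.natCast_self _
  have hpN (v : Fin m → ZMod (p ^ (k + 1))) : p • v ∈ Mtor k := by
    rw [hMtor, smul_smul, ← pow_succ]
    ext i
    simp
  have hfN (v) (hv : v ∈ Mtor k) : f v ∈ Mtor k := by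
    rw [hMtor] at hv ⊢
    rw [← map_nsmul, hv, map_zero]
  have hcycle := f.iterate_sub_mem_of_isGreatest hpN hfN hc
  let F : Module.End (ZMod (p ^ (k + 1))) (Fin m → ZMod (p ^ (k + 1))) :=
    f.toAddMonoidHom.toZModLinearMap _
  obtain ⟨h, hh⟩ := (Pi.basisFun _ (Fin m)).exists_eq_smul_of_forall_exists (F ^ c - 1)
    (p : ZMod (p ^ (k + 1))) fun j => ZMod.exists_eq_smul_of_pow_nsmul_eq_zero <|
      (hMtor k _).1 <| by simpa [F, Module.End.coe_pow] using hcycle (Pi.basisFun _ (Fin m) j)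
  have hpow : (F ^ c) ^ p ^ k = 1 := by
    rw [eq_add_of_sub_eq' hh, Nat.cast_smul_eq_nsmul, nsmul_eq_mul]
    refine one_add_natCast_mul_pow_pow_eq_one ?_ h
    rw [← map_natCast (algebraMap (ZMod (p ^ (k + 1))) (Module.End _ _)), ← map_pow, hchar,
      map_zero]
  intro u
  refine IsPeriodicPt.minimalPeriod_dvd ?_
  change (⇑F)^[p ^ k * c] u = u
  rw [← Module.End.coe_pow, mul_comm, pow_mul, hpow, Module.End.one_apply]

theorem stmt_11 (p : ℕ) (hp : p.Prime) (a m : ℕ) (ha : 1 ≤ a) (hm : 1 ≤ m)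
    (f : (Fin m → ZMod (p ^ a)) ≃+ (Fin m → ZMod (p ^ a)))
    (Mtor : ℕ → AddSubgroup (Fin m → ZMod (p ^ a)))
    (hMtor : ∀ i v, v ∈ Mtor i ↔ p ^ i • v = 0)
    (c : ℕ)
    -- `c` is the maximal cycle length of the automorphism induced by `f` on
    -- `M / Mtor (a-1) ≅ (ℤ/p)^m`, where the cycle length of the image of `u`
    -- is the least positive `t` with `f^[t] u ≡ u mod Mtor (a-1)`
    (hc : IsGreatest {t | ∃ u : Fin m → ZMod (p ^ a),
      IsLeast {t' | 0 < t' ∧ (⇑f)^[t'] u - u ∈ Mtor (a - 1)} t} c) :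
    ∀ u : Fin m → ZMod (p ^ a),
      Function.minimalPeriod (⇑f) u ∣ p ^ (a - 1) * c :=
  stmt_11_general p hp a m ha f Mtor hMtor c hc
end
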